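/- arXiv:1606.04133 — 7 statements merged into one kernel-verified Lean document; each statement's English description precedes it below -/
import Mathlib

section
/- Let A be an n×n real matrix such that 1 is not an eigenvalue of A (so A − I is invertible), let x* ∈ ℝⁿ, and define the linear iteration x_i = A(x_{i−1} − x*) + x* for i ≥ 1 starting from x₀ ∈ ℝⁿ. Suppose p(x) = Σ_{i=0}^{k} c_i x^i is a polynomial satisfying p(A)(x₁ − x₀) = 0 and p(1) = Σ_{i=0}^{k} c_i = 1. Then the fixed point is recovered exactly as a weighted average of the iterates: x* = Σ_{i=0}^{k} c_i x_i. -/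
/-- Minimal polynomial extrapolation recovers the fixed point exactly
for linear iterations `x_i = A(x_{i-1} - x*) + x*`, when `p(A)(x₁ - x₀) = 0` and `p(1) = 1`. -/
theorem mpe_exact_recovery {n k : ℕ} (A : Matrix (Fin n) (Fin n) ℝ)
    (hA : ¬ Module.End.HasEigenvalue (Matrix.mulVecLin A) 1)
    (xstar : Fin n → ℝ) (x : ℕ → Fin n → ℝ)
    (hx : ∀ i : ℕ, x (i + 1) = A.mulVec (x i - xstar) + xstar)
    (c : Fin (k + 1) → ℝ)
    (hp : (∑ i : Fin (k + 1), c i • A ^ (i : ℕ)).mulVec (x 1 - x 0) = 0)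
    (hc : ∑ i : Fin (k + 1), c i = 1) :
    xstar = ∑ i : Fin (k + 1), c i • x i := by
  set d : Fin n → ℝ := x 0 - xstar with hd
  -- iterates in terms of powers
  have hiter : ∀ i : ℕ, x i - xstar = (A ^ i).mulVec d := by
    intro i
    induction i with
    | zero => simp [hd]
    | succ i ih =>
        have : x (i + 1) - xstar = A.mulVec (x i - xstar) := by
          rw [hx i]; abel
        rw [this, ih, pow_succ']
        rw [Matrix.mulVec_mulVec]
  -- first increment
  have hinc : x 1 - x 0 = (A - 1).mulVec d := by
    have h1 : x 1 - xstar = A.mulVec d := by simpa using hiter 1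
    have : x 1 - x 0 = (x 1 - xstar) - (x 0 - xstar) := by abel
    rw [this, h1, ← hd, Matrix.sub_mulVec, Matrix.one_mulVec]
  set P : Matrix (Fin n) (Fin n) ℝ := ∑ i : Fin (k + 1), c i • A ^ (i : ℕ) with hP
  set w : Fin n → ℝ := P.mulVec d with hw
  have hcomm : P * (A - 1) = (A - 1) * P := by
    refine (Commute.sum_left _ _ _ fun i _ => ?_)
    exact (((Commute.refl A).sub_right (Commute.one_right A)).pow_left (i : ℕ)).smul_left (c i)
  have hker : (A - 1).mulVec w = 0 := by
    rw [hw, Matrix.mulVec_mulVec, ← hcomm, ← Matrix.mulVec_mulVec, ← hinc, hp]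
  have hw0 : w = 0 := by
    by_contra hne
    apply hA
    rw [Module.End.hasEigenvalue_iff]
    refine Submodule.ne_bot_iff _ |>.mpr ⟨w, ?_, hne⟩
    rw [Module.End.mem_eigenspace_iff]
    have : A.mulVec w - w = 0 := by
      simpa [Matrix.sub_mulVec, Matrix.one_mulVec] using hker
    have hAw : A.mulVec w = w := by
      have := sub_eq_zero.mp this
      exact this
    simpa [Matrix.mulVecLin] using hAw
  -- conclude
  have hsum : ∑ i : Fin (k + 1), c i • x i = xstar + w := by
    have hxi : ∀ i : Fin (k + 1), x (i : ℕ) = xstar + (A ^ (i : ℕ)).mulVec d := by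
      intro i
      have := hiter (i : ℕ)
      rw [sub_eq_iff_eq_add] at this
      rw [this]; abel
    calc ∑ i : Fin (k + 1), c i • x (i : ℕ)
        = ∑ i : Fin (k + 1), (c i • xstar + c i • (A ^ (i : ℕ)).mulVec d) := by
          refine Finset.sum_congr rfl fun i _ => ?_
          rw [hxi i, smul_add]
      _ = (∑ i : Fin (k + 1), c i) • xstar + ∑ i : Fin (k + 1), (c i • (A ^ (i : ℕ))).mulVec d := by
          rw [Finset.sum_add_distrib, Finset.sum_smul]
          congr 1
          refine Finset.sum_congr rfl fun i _ => ?_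
          rw [Matrix.smul_mulVec]
      _ = xstar + w := by
          rw [hc, one_smul, hw, hP]
          congr 1
          ext j
          simp [Matrix.mulVec, dotProduct, Finset.sum_apply, Finset.sum_mul]
          simp [Matrix.sum_apply, Finset.sum_mul]
          exact Finset.sum_comm
  rw [hsum, hw0, add_zero]
end

section
/- Let A be an n×n real symmetric matrix with 0 ⪯ A ⪯ σI for some σ < 1, let x* ∈ ℝⁿ, and define iterates x_i = A(x_{i−1} − x*) + x* from x₀. Let U = [x₁ − x₀, …, x_{k+1} − x_k] ∈ ℝ^{n×(k+1)} and let c* be a minimizer of ‖Uc‖₂ over vectors c ∈ ℝ^{k+1} with 𝟏ᵀc = 1. Then ‖Σ_{i=0}^{k} c*_i x_i − x*‖₂ ≤ κ(A−I) · (2ζ^k/(1+ζ^{2k})) · ‖x₀ − x*‖₂, where ζ = (1 − √(1−σ))/(1 + √(1−σ)) and κ(A−I) = ‖A−I‖₂‖(A−I)^{-1}‖₂ is the condition number of A−I in spectral norm. -/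
open scoped Matrix.Norms.L2Operator
open Matrix

/-- The Euclidean (ℓ₂) norm of a vector in `ℝⁿ`. -/
noncomputable def euclNorm {n : ℕ} (v : Fin n → ℝ) : ℝ := Real.sqrt (∑ i, v i ^ 2)

/-!
Write `e = x₀ - x*` and `p_c = ∑ cⱼ Xʲ`. Since `xⱼ - x* = Aʲ e` and `xⱼ₊₁ - xⱼ = (A - I)(xⱼ - x*)`,
every `c` with `∑ cⱼ = 1` has residual `∑ cⱼ xⱼ - x* = p_c(A) e` and `U c = (A - I) p_c(A) e`. Hence
`‖∑ c*ⱼ xⱼ - x*‖ ≤ ‖(A - I)⁻¹‖ ‖U c*‖ ≤ ‖(A - I)⁻¹‖ ‖U c‖ ≤ κ(A - I) ‖p_c(A)‖ ‖e‖` for every admissible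
`c`, and by the functional calculus `‖p_c(A)‖ ≤ max |p_c|` over `spec A ⊆ [0, σ]`. The Chebyshev
polynomial `T_k` moved from `[-1, 1]` to `[0, σ]` and normalised by `p(1) = 1` has
`max |p| = 1 / T_k(2/σ - 1)`, and `2/σ - 1 = (ζ + ζ⁻¹)/2` makes this `2ζᵏ / (1 + ζ²ᵏ)`.
-/

open Polynomial Polynomial.Chebyshev

theorem Polynomial.Chebyshev.T_real_eval_add_inv_div_two {y : ℝ} (hy : 0 < y) (k : ℕ) :
    (T ℝ k).eval ((y + y⁻¹) / 2) = (y ^ k + (y ^ k)⁻¹) / 2 := by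
  rw [← Real.cosh_log hy, T_real_cosh, ← Real.cosh_log (pow_pos hy k), Real.log_pow]
  push_cast; rfl

lemma zeta_pos {σ ζ : ℝ} (hσ0 : 0 < σ) (hζ : ζ = (1 - √(1 - σ)) / (1 + √(1 - σ))) : 0 < ζ := by
  have hs : √(1 - σ) < 1 := (Real.sqrt_lt' one_pos).mpr (by linarith)
  rw [hζ]; apply div_pos <;> linarith [Real.sqrt_nonneg (1 - σ)]

lemma zeta_add_inv_div_two {σ ζ : ℝ} (hσ0 : 0 < σ) (hσ1 : σ ≤ 1)
    (hζ : ζ = (1 - √(1 - σ)) / (1 + √(1 - σ))) : (ζ + ζ⁻¹) / 2 = 2 / σ - 1 := by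
  have hs : √(1 - σ) ^ 2 = 1 - σ := Real.sq_sqrt (by linarith)
  have hs1 : 1 - √(1 - σ) ≠ 0 := (sub_pos.mpr ((Real.sqrt_lt' one_pos).mpr (by linarith))).ne'
  have hs2 : 1 + √(1 - σ) ≠ 0 := by positivity
  rw [hζ, inv_div]
  field_simp
  linear_combination 4 * hs

lemma exists_natDegree_le_eval_one_abs_le {σ ζ : ℝ} (hσ0 : 0 ≤ σ) (hσ1 : σ < 1)
    (hζ : ζ = (1 - √(1 - σ)) / (1 + √(1 - σ))) (k : ℕ) :
    ∃ Q : ℝ[X], Q.natDegree ≤ k ∧ Q.eval 1 = 1 ∧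
      ∀ t ∈ Set.Icc 0 σ, |Q.eval t| ≤ 2 * ζ ^ k / (1 + ζ ^ (2 * k)) := by
  rcases hσ0.eq_or_lt with rfl | hσ0
  · refine ⟨X ^ k, by simp, by simp, fun t ht => ?_⟩
    obtain rfl : t = 0 := le_antisymm ht.2 ht.1
    obtain rfl : ζ = 0 := by simpa using hζ
    cases k <;> norm_num
  have hζ0 := zeta_pos hσ0 hζ
  set τ := (T ℝ k).eval (2 / σ - 1) with hτ
  have hτ_eq : τ = (ζ ^ k + (ζ ^ k)⁻¹) / 2 := by
    rw [hτ, ← zeta_add_inv_div_two hσ0 hσ1.le hζ, T_real_eval_add_inv_div_two hζ0]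
  have hτ0 : 0 < τ := by rw [hτ_eq]; positivity
  have hτ_inv : τ⁻¹ = 2 * ζ ^ k / (1 + ζ ^ (2 * k)) := by
    rw [hτ_eq, pow_mul']; field_simp; ring
  refine ⟨C τ⁻¹ * (T ℝ k).comp (C (2 / σ) * X - 1), ?_, ?_, fun t ht => ?_⟩
  · refine (natDegree_C_mul_le _ _).trans (natDegree_comp_le.trans ?_)
    have hlin : (C (2 / σ) * X - 1 : ℝ[X]).natDegree ≤ 1 := by compute_degree
    rw [natDegree_T, Int.natAbs_natCast]
    simpa using Nat.mul_le_mul_left k hlin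
  · simp [eval_comp, ← hτ, hτ0.ne']
  · have harg : |2 / σ * t - 1| ≤ 1 := by
      have hlo : 0 ≤ 2 / σ * t := by have := ht.1; positivity
      have hhi : 2 / σ * t ≤ 2 := by rw [div_mul_eq_mul_div, div_le_iff₀ hσ0]; linarith [ht.2]
      rw [abs_le]; constructor <;> linarith
    simp only [eval_mul, eval_C, eval_comp, eval_sub, eval_X, eval_one, abs_mul,
      abs_of_pos (inv_pos.mpr hτ0), ← hτ_inv]
    exact mul_le_of_le_one_right (by positivity) (abs_eval_T_real_le_one k harg)

lemma sum_coeff_eq_eval_one {R : Type*} [Semiring R] {k : ℕ} {Q : R[X]} (hQ : Q.natDegree ≤ k) :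
    ∑ j : Fin (k + 1), Q.coeff j = Q.eval 1 := by
  simp [eval_eq_sum_range' (Nat.lt_succ_of_le hQ), Fin.sum_univ_eq_sum_range (fun j => Q.coeff j)]

lemma Finset.sum_smul_sub_of_sum_eq_one {ι R M : Type*} [Ring R] [AddCommGroup M] [Module R M]
    {s : Finset ι} {c : ι → R} (hc : ∑ i ∈ s, c i = 1) (v : ι → M) (w : M) :
    (∑ i ∈ s, c i • v i) - w = ∑ i ∈ s, c i • (v i - w) := by
  simp only [smul_sub, Finset.sum_sub_distrib, ← Finset.sum_smul, hc, one_smul]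

section LinearIteration

variable {R ι : Type*} [CommRing R] [Fintype ι] [DecidableEq ι] {A : Matrix ι ι R}

lemma eq_pow_mulVec_of_forall_succ {y : ℕ → ι → R} (hy : ∀ i, y (i + 1) = A *ᵥ y i) (i : ℕ) :
    y i = (A ^ i) *ᵥ y 0 := by
  induction i with
  | zero => simp
  | succ i ih => rw [hy, ih, mulVec_mulVec, pow_succ']

lemma aeval_mulVec_eq_sum_coeff_smul {y : ℕ → ι → R} (hy : ∀ i, y (i + 1) = A *ᵥ y i)
    {k : ℕ} {Q : R[X]} (hQ : Q.natDegree ≤ k) :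
    aeval A Q *ᵥ y 0 = ∑ j : Fin (k + 1), Q.coeff j • y j := by
  rw [aeval_eq_sum_range' (Nat.lt_succ_of_le hQ), sum_mulVec, ← Fin.sum_univ_eq_sum_range]
  simp only [smul_mulVec, ← eq_pow_mulVec_of_forall_succ hy]

lemma increments_mulVec_eq {m : ℕ} {x : ℕ → ι → R} {xstar : ι → R}
    (hx : ∀ i, x (i + 1) = A *ᵥ (x i - xstar) + xstar) {U : Matrix ι (Fin m) R}
    (hU : ∀ r j, U r j = (x ((j : ℕ) + 1) - x j) r) (c : Fin m → R) :
    U *ᵥ c = (A - 1) *ᵥ ∑ j, c j • (x j - xstar) := by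
  have hstep : ∀ j, x (j + 1) - x j = (A - 1) *ᵥ (x j - xstar) := fun j => by
    rw [hx, sub_mulVec, one_mulVec]; abel
  ext r
  simp only [mulVec_sum, mulVec_smul, ← hstep, Finset.sum_apply, Pi.smul_apply, smul_eq_mul, ← hU]
  simp [mulVec, dotProduct, mul_comm]

end LinearIteration

section Spectrum

variable {ι : Type*} [Fintype ι] [DecidableEq ι]

open scoped MatrixOrder in
lemma spectrum_subset_Icc_of_posSemidef {A : Matrix ι ι ℝ} {σ : ℝ} (hA0 : A.PosSemidef)
    (hAσ : (σ • 1 - A).PosSemidef) : spectrum ℝ A ⊆ Set.Icc 0 σ := by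
  intro t ht
  refine ⟨spectrum_nonneg_of_nonneg (nonneg_iff_posSemidef.mpr hA0) ht, ?_⟩
  have hle : A ≤ algebraMap ℝ _ σ := by rwa [le_iff, Algebra.algebraMap_eq_smul_one]
  exact (le_algebraMap_iff_spectrum_le hA0.isHermitian.isSelfAdjoint).mp hle t ht

lemma isUnit_sub_one_of_spectrum_subset {A : Matrix ι ι ℝ} {σ : ℝ} (hσ : σ < 1)
    (h : spectrum ℝ A ⊆ Set.Icc 0 σ) : IsUnit (A - 1) := by
  have h1 : (1 : ℝ) ∉ spectrum ℝ A := fun h1 => absurd (h h1).2 (not_le.mpr hσ)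
  rw [spectrum.notMem_iff, map_one] at h1
  simpa using h1.neg

lemma Matrix.IsHermitian.norm_aeval_le {A : Matrix ι ι ℝ}
    (hA : A.IsHermitian) (Q : ℝ[X]) {M : ℝ} (hM : 0 ≤ M)
    (h : ∀ t ∈ spectrum ℝ A, |Q.eval t| ≤ M) : ‖aeval A Q‖ ≤ M := by
  rw [← cfc_polynomial Q A hA.isSelfAdjoint]
  exact norm_cfc_le hM h

end Spectrum

lemma euclNorm_eq_norm_toLp {n : ℕ} (v : Fin n → ℝ) : euclNorm v = ‖WithLp.toLp 2 v‖ := by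
  simp [euclNorm, EuclideanSpace.norm_eq]

lemma euclNorm_mulVec_le {m n : ℕ} (M : Matrix (Fin m) (Fin n) ℝ) (v : Fin n → ℝ) :
    euclNorm (M *ᵥ v) ≤ ‖M‖ * euclNorm v := by
  simpa [euclNorm_eq_norm_toLp] using M.l2_opNorm_mulVec (WithLp.toLp 2 v)

lemma euclNorm_le_cond_mul_of_le {n m : ℕ} {B : Matrix (Fin n) (Fin n) ℝ} (hB : IsUnit B)
    {U : Matrix (Fin n) (Fin m) ℝ} {r : (Fin m → ℝ) → Fin n → ℝ} (hUr : ∀ c, U *ᵥ c = B *ᵥ r c)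
    {c₀ c : Fin m → ℝ} (hc₀ : euclNorm (U *ᵥ c₀) ≤ euclNorm (U *ᵥ c)) :
    euclNorm (r c₀) ≤ ‖B‖ * ‖B⁻¹‖ * euclNorm (r c) := by
  have hr : r c₀ = B⁻¹ *ᵥ U *ᵥ c₀ := by
    rw [hUr, mulVec_mulVec, nonsing_inv_mul _ ((isUnit_iff_isUnit_det B).mp hB), one_mulVec]
  calc euclNorm (r c₀) ≤ ‖B⁻¹‖ * euclNorm (U *ᵥ c₀) := hr ▸ euclNorm_mulVec_le _ _
    _ ≤ ‖B⁻¹‖ * euclNorm (B *ᵥ r c) := by rw [← hUr]; gcongr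
    _ ≤ ‖B⁻¹‖ * (‖B‖ * euclNorm (r c)) := by gcongr; exact euclNorm_mulVec_le _ _
    _ = ‖B‖ * ‖B⁻¹‖ * euclNorm (r c) := by ring

theorem ampe_rate_general {n k : ℕ} (A : Matrix (Fin n) (Fin n) ℝ)
    (σ : ℝ) (hσ : σ < 1)
    (hA0 : A.PosSemidef) (hAσ : (σ • (1 : Matrix (Fin n) (Fin n) ℝ) - A).PosSemidef)
    (xstar : Fin n → ℝ) (x : ℕ → Fin n → ℝ)
    (hx : ∀ i : ℕ, x (i + 1) = A.mulVec (x i - xstar) + xstar)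
    (U : Matrix (Fin n) (Fin (k + 1)) ℝ)
    (hU : ∀ (r : Fin n) (j : Fin (k + 1)), U r j = (x ((j : ℕ) + 1) - x (j : ℕ)) r)
    (cstar : Fin (k + 1) → ℝ) (hcs : ∑ i, cstar i = 1)
    (hmin : ∀ c : Fin (k + 1) → ℝ, ∑ i, c i = 1 →
      euclNorm (U.mulVec cstar) ≤ euclNorm (U.mulVec c))
    (ζ : ℝ) (hζ : ζ = (1 - Real.sqrt (1 - σ)) / (1 + Real.sqrt (1 - σ))) :
    euclNorm ((∑ i : Fin (k + 1), cstar i • x i) - xstar) ≤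
      (‖A - 1‖ * ‖(A - 1)⁻¹‖) * (2 * ζ ^ k / (1 + ζ ^ (2 * k))) * euclNorm (x 0 - xstar) := by
  obtain hn | ⟨⟨i₀⟩⟩ := isEmpty_or_nonempty (Fin n)
  · simp [euclNorm]
  have hspec := spectrum_subset_Icc_of_posSemidef hA0 hAσ
  have hσ0 : 0 ≤ σ :=
    Set.nonempty_Icc.mp ⟨_, hspec (hA0.isHermitian.eigenvalues_mem_spectrum_real i₀)⟩
  obtain ⟨Q, hQdeg, hQ1, hQbound⟩ := exists_natDegree_le_eval_one_abs_le hσ0 hσ hζ k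
  have hM : 0 ≤ 2 * ζ ^ k / (1 + ζ ^ (2 * k)) := (abs_nonneg _).trans (hQbound 0 ⟨le_rfl, hσ0⟩)
  have hpoly : ‖aeval A Q‖ ≤ 2 * ζ ^ k / (1 + ζ ^ (2 * k)) :=
    hA0.isHermitian.norm_aeval_le Q hM fun t ht => hQbound t (hspec ht)
  have hiter : ∀ i, x (i + 1) - xstar = A *ᵥ (x i - xstar) := fun i => by simp [hx]
  calc euclNorm ((∑ i, cstar i • x i) - xstar) = euclNorm (∑ i, cstar i • (x i - xstar)) := by
        rw [Finset.sum_smul_sub_of_sum_eq_one hcs]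
    _ ≤ ‖A - 1‖ * ‖(A - 1)⁻¹‖ * euclNorm (∑ j : Fin (k + 1), Q.coeff j • (x j - xstar)) :=
        euclNorm_le_cond_mul_of_le (isUnit_sub_one_of_spectrum_subset hσ hspec)
          (increments_mulVec_eq hx hU) (hmin _ (by rw [sum_coeff_eq_eval_one hQdeg, hQ1]))
    _ = ‖A - 1‖ * ‖(A - 1)⁻¹‖ * euclNorm (aeval A Q *ᵥ (x 0 - xstar)) := by
        rw [aeval_mulVec_eq_sum_coeff_smul (y := fun i => x i - xstar) hiter hQdeg]
    _ ≤ ‖A - 1‖ * ‖(A - 1)⁻¹‖ * (‖aeval A Q‖ * euclNorm (x 0 - xstar)) := by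
        gcongr; exact euclNorm_mulVec_le _ _
    _ ≤ ‖A - 1‖ * ‖(A - 1)⁻¹‖ * (2 * ζ ^ k / (1 + ζ ^ (2 * k)) * euclNorm (x 0 - xstar)) := by
        gcongr; exact Real.sqrt_nonneg _
    _ = _ := by ring

/-- Convergence bound for approximate minimal polynomial extrapolation (AMPE)
applied to linear iterations with a symmetric matrix `0 ⪯ A ⪯ σ I`, `σ < 1`. -/
theorem ampe_rate {n k : ℕ} (A : Matrix (Fin n) (Fin n) ℝ) (hA : A.IsSymm)
    (σ : ℝ) (hσ : σ < 1)
    (hA0 : A.PosSemidef) (hAσ : (σ • (1 : Matrix (Fin n) (Fin n) ℝ) - A).PosSemidef)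
    (xstar : Fin n → ℝ) (x : ℕ → Fin n → ℝ)
    (hx : ∀ i : ℕ, x (i + 1) = A.mulVec (x i - xstar) + xstar)
    (U : Matrix (Fin n) (Fin (k + 1)) ℝ)
    (hU : ∀ (r : Fin n) (j : Fin (k + 1)), U r j = (x ((j : ℕ) + 1) - x (j : ℕ)) r)
    (cstar : Fin (k + 1) → ℝ) (hcs : ∑ i, cstar i = 1)
    (hmin : ∀ c : Fin (k + 1) → ℝ, ∑ i, c i = 1 →
      euclNorm (U.mulVec cstar) ≤ euclNorm (U.mulVec c))
    (ζ : ℝ) (hζ : ζ = (1 - Real.sqrt (1 - σ)) / (1 + Real.sqrt (1 - σ))) :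
    euclNorm ((∑ i : Fin (k + 1), cstar i • x i) - xstar) ≤
      (‖A - 1‖ * ‖(A - 1)⁻¹‖) * (2 * ζ ^ k / (1 + ζ ^ (2 * k))) * euclNorm (x 0 - xstar) :=
  ampe_rate_general A σ hσ hA0 hAσ xstar x hx U hU cstar hcs hmin ζ hζ
end

section
/- Fix 0 < σ < 1 and an integer k ≥ 1. Then the minimum over real polynomials p of degree at most k with p(1) = 1 of max_{x ∈ [0,σ]} |p(x)| equals 2ζ^k/(1+ζ^{2k}), where ζ = (1 − √(1−σ))/(1 + √(1−σ)); the minimum is attained by the rescaled Chebyshev polynomial T(x) = C_k(t(x))/C_k(t(1)) with t(x) = (2x − σ)/σ, where C_k is the degree-k Chebyshev polynomial of the first kind. -/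
/-!
Substituting `t = 2x/σ - 1` turns `T` into `C_k(t) / M` with `M = C_k((2 - σ)/σ) ≥ 1`, so on
`[0, σ]` we have `|T| ≤ 1/M`, with `T = ±1/M` alternately at the `k + 1` Chebyshev extremal
points carried over to `[0, σ]`. If some `p` with `p(1) = 1` stayed below `1/M` there, `T - p`
would alternate in sign at these points and vanish at `1 > σ`: `k + 1` roots for a nonzero
polynomial of degree at most `k`. Finally `(2 - σ)/σ = (ζ + ζ⁻¹)/2`, and
`C_k((z + z⁻¹)/2) = (z^k + z⁻ᵏ)/2` (write `z = exp θ` and use `C_k(cosh θ) = cosh kθ`)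
gives `1/M = 2ζᵏ/(1 + ζ^{2k})`.
-/

open Polynomial Set

namespace Polynomial

theorem eval_ne_zero_of_alternating {q : ℝ[X]} {k : ℕ} (hq : q.natDegree ≤ k) {x : ℕ → ℝ}
    (hx : StrictAntiOn x (Iic k)) (halt : ∀ j ≤ k, 0 < (-1) ^ j * q.eval (x j))
    {c : ℝ} (hc : x 0 < c) : q.eval c ≠ 0 := by
  have hroot : ∀ j : Fin k, ∃ r ∈ Ioo (x (j + 1)) (x j), q.eval r = 0 := by
    intro j
    have hlt : x (j + 1) < x j := hx (mem_Iic.2 j.2.le) (mem_Iic.2 j.2) (Nat.lt_succ_self _)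
    have hsign : (-1) ^ (j : ℕ) * q.eval (x (j + 1)) < 0 := by
      have := halt (j + 1) j.2
      rw [pow_succ] at this
      linarith
    obtain ⟨r, hr, hr0⟩ := intermediate_value_Ioo hlt.le
      (continuous_const.mul q.continuous).continuousOn ⟨hsign, halt j j.2.le⟩
    exact ⟨r, hr, (mul_eq_zero.1 hr0).resolve_left (pow_ne_zero _ (by norm_num))⟩
  choose r hr hr0 using hroot
  have hr_anti : StrictAnti r := fun i j hij =>
    calc r j < x j := (hr j).2
      _ ≤ x (i + 1) := hx.antitoneOn (mem_Iic.2 (by omega)) (mem_Iic.2 j.2.le) (by omega)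
      _ < r i := (hr i).1
  have hc_notMem : c ∉ range r := by
    rintro ⟨j, rfl⟩
    have := hx.antitoneOn (mem_Iic.2 (Nat.zero_le _)) (mem_Iic.2 j.2.le) (Nat.zero_le j)
    linarith [(hr j).2]
  intro hqc
  have hq0 : q = 0 := eq_zero_of_natDegree_lt_card_of_eval_eq_zero q
    (Fin.cons_injective_iff.2 ⟨hc_notMem, hr_anti.injective⟩)
    (Fin.cases hqc hr0) (by simpa using Nat.lt_succ_of_le hq)
  simpa [hq0] using halt 0 (Nat.zero_le k)

theorem exists_le_abs_eval_of_equioscillation {P p : ℝ[X]} {k : ℕ} (hP : P.natDegree ≤ k)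
    (hp : p.natDegree ≤ k) {x : ℕ → ℝ} (hx : StrictAntiOn x (Iic k)) {m : ℝ}
    (hPx : ∀ j ≤ k, P.eval (x j) = (-1) ^ j * m) {c : ℝ} (hc : x 0 < c)
    (hpc : p.eval c = P.eval c) : ∃ j ≤ k, m ≤ |p.eval (x j)| := by
  by_contra! hsmall
  refine eval_ne_zero_of_alternating (q := P - p) ((natDegree_sub_le P p).trans (max_le hP hp))
    hx (fun j hj => ?_) hc (by simp [hpc])
  have hpj : (-1) ^ j * p.eval (x j) < m := by
    refine lt_of_le_of_lt ?_ (hsmall j hj)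
    simpa [abs_mul] using le_abs_self ((-1) ^ j * p.eval (x j))
  have hsq : (-1 : ℝ) ^ j * (-1) ^ j = 1 := by rw [← mul_pow]; norm_num
  rw [eval_sub, hPx j hj, mul_sub, ← mul_assoc, hsq, one_mul]
  linarith

end Polynomial

namespace Polynomial.Chebyshev

theorem T_real_eval_half_add_inv {z : ℝ} (hz : 0 < z) (n : ℕ) :
    (T ℝ n).eval ((z + z⁻¹) / 2) = (z ^ n + (z ^ n)⁻¹) / 2 := by
  rw [← Real.cosh_log hz, T_real_cosh, ← Real.cosh_log (pow_pos hz n), Real.log_pow]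
  push_cast
  rfl

theorem inv_T_real_eval_two_sub_div {σ ζ : ℝ} (hσ0 : 0 < σ) (hσ1 : σ < 1)
    (hζ : ζ = (1 - √(1 - σ)) / (1 + √(1 - σ))) (n : ℕ) :
    ((T ℝ n).eval ((2 - σ) / σ))⁻¹ = 2 * ζ ^ n / (1 + ζ ^ (2 * n)) := by
  have hs0 : 0 < √(1 - σ) := Real.sqrt_pos.2 (by linarith)
  have hs2 : √(1 - σ) ^ 2 = 1 - σ := Real.sq_sqrt (by linarith)
  have hs1 : √(1 - σ) < 1 := by nlinarith
  have hζ0 : 0 < ζ := hζ ▸ div_pos (by linarith) (by linarith)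
  have hmid : (2 - σ) / σ = (ζ⁻¹ + ζ⁻¹⁻¹) / 2 := by
    rw [inv_inv, hζ, inv_div]
    field_simp [(by linarith : 1 - √(1 - σ) ≠ 0)]
    nlinarith
  rw [hmid, T_real_eval_half_add_inv (inv_pos.2 hζ0), inv_pow, inv_inv, pow_mul]
  field_simp
  ring

theorem natDegree_T_comp_C_mul_X_sub_one_le (a : ℝ) (n : ℕ) :
    ((T ℝ n).comp (Polynomial.C a * X - 1)).natDegree ≤ n := by
  have hlin : (Polynomial.C a * X - 1 : ℝ[X]).natDegree ≤ 1 := by compute_degree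
  refine natDegree_comp_le.trans ?_
  simpa using Nat.mul_le_mul_left n hlin

noncomputable def shiftedNode (σ : ℝ) (n i : ℕ) : ℝ := σ * (1 + node n i) / 2

variable {σ : ℝ}

theorem two_div_mul_shiftedNode_sub_one (hσ : σ ≠ 0) (n i : ℕ) :
    2 / σ * shiftedNode σ n i - 1 = node n i := by
  rw [shiftedNode]
  field_simp
  ring

theorem shiftedNode_zero (n : ℕ) : shiftedNode σ n 0 = σ := by
  rw [shiftedNode, node_eq_one]
  ring

theorem shiftedNode_mem_Icc (hσ : 0 ≤ σ) (n i : ℕ) : shiftedNode σ n i ∈ Icc 0 σ := by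
  obtain ⟨h1, h2⟩ := node_mem_Icc (n := n) (i := i)
  constructor <;> rw [shiftedNode] <;> nlinarith

theorem strictAntiOn_shiftedNode (hσ : 0 < σ) (n : ℕ) :
    StrictAntiOn (shiftedNode σ n) (Iic n) := by
  intro i hi j hj hij
  have := strictAntiOn_node n (by simpa [Nat.lt_succ_iff] using hi)
    (by simpa [Nat.lt_succ_iff] using hj) hij
  simp only [shiftedNode]
  gcongr

theorem two_div_mul_sub_one_mem_Icc (hσ : 0 < σ) {x : ℝ} (hx : x ∈ Icc 0 σ) :
    2 / σ * x - 1 ∈ Icc (-1) 1 := by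
  obtain ⟨h0, h1⟩ := hx
  constructor
  · have : 0 ≤ 2 / σ * x := by positivity
    linarith
  · rw [sub_le_iff_le_add, div_mul_eq_mul_div, div_le_iff₀ hσ]
    linarith

end Polynomial.Chebyshev

open Polynomial.Chebyshev

theorem chebyshev_minimax_general (σ : ℝ) (hσ0 : 0 < σ) (hσ1 : σ < 1) (k : ℕ)
    (ζ : ℝ) (hζ : ζ = (1 - Real.sqrt (1 - σ)) / (1 + Real.sqrt (1 - σ)))
    (T : Polynomial ℝ)
    (hT : T = Polynomial.C (((Polynomial.Chebyshev.T ℝ (k : ℤ)).eval ((2 - σ) / σ))⁻¹) *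
      ((Polynomial.Chebyshev.T ℝ (k : ℤ)).comp (Polynomial.C (2 / σ) * Polynomial.X - 1))) :
    IsLeast {y : ℝ | ∃ p : Polynomial ℝ, p.natDegree ≤ k ∧ p.eval 1 = 1 ∧
        y = sSup ((fun x => |p.eval x|) '' Set.Icc 0 σ)}
      (2 * ζ ^ k / (1 + ζ ^ (2 * k))) ∧
    T.natDegree ≤ k ∧ T.eval 1 = 1 ∧
    sSup ((fun x => |T.eval x|) '' Set.Icc 0 σ) = 2 * ζ ^ k / (1 + ζ ^ (2 * k)) := by
  set M := (Chebyshev.T ℝ k).eval ((2 - σ) / σ)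
  have hM : 0 < M := one_pos.trans_le (one_le_eval_T_real k (by rw [le_div_iff₀ hσ0]; linarith))
  have hTeval : ∀ x, T.eval x = M⁻¹ * (Chebyshev.T ℝ k).eval (2 / σ * x - 1) := by
    simp [hT, eval_comp]
  have hTdeg : T.natDegree ≤ k :=
    hT ▸ (natDegree_C_mul_le _ _).trans (natDegree_T_comp_C_mul_X_sub_one_le _ k)
  have hT1 : T.eval 1 = 1 := by
    rw [hTeval, (by field_simp : 2 / σ * 1 - 1 = (2 - σ) / σ), inv_mul_cancel₀ hM.ne']
  have hTnode : ∀ j ≤ k, T.eval (shiftedNode σ k j) = (-1) ^ j * M⁻¹ := fun j hj => by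
    rw [hTeval, two_div_mul_shiftedNode_sub_one hσ0.ne', eval_T_real_node (Finset.mem_Iic.2 hj),
      mul_comm]
  have hTmax : IsGreatest ((fun x => |T.eval x|) '' Icc 0 σ) M⁻¹ := by
    refine ⟨⟨σ, right_mem_Icc.2 hσ0.le, ?_⟩, ?_⟩
    · simpa [shiftedNode_zero, abs_of_pos hM] using congrArg abs (hTnode 0 (Nat.zero_le k))
    · rintro _ ⟨x, hx, rfl⟩
      dsimp only
      rw [hTeval, abs_mul, abs_of_pos (inv_pos.2 hM)]
      exact mul_le_of_le_one_right (inv_pos.2 hM).le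
        (abs_eval_T_real_le_one k (abs_le.2 (two_div_mul_sub_one_mem_Icc hσ0 hx)))
  have hsup := hTmax.csSup_eq
  rw [← inv_T_real_eval_two_sub_div hσ0 hσ1 hζ k]
  refine ⟨⟨⟨T, hTdeg, hT1, hsup.symm⟩, ?_⟩, hTdeg, hT1, hsup⟩
  rintro _ ⟨p, hp, hp1, rfl⟩
  obtain ⟨j, -, hj⟩ := exists_le_abs_eval_of_equioscillation hTdeg hp
    (strictAntiOn_shiftedNode hσ0 k) hTnode (c := 1) (by rwa [shiftedNode_zero])
    (hp1.trans hT1.symm)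
  exact hj.trans (le_csSup (isCompact_Icc.image p.continuous.abs).bddAbove
    ⟨_, shiftedNode_mem_Icc hσ0.le k j, rfl⟩)

/-- The constrained Chebyshev minimax problem on `[0, σ]`: the minimum of
`max_{x ∈ [0,σ]} |p(x)|` over polynomials of degree at most `k` with `p(1) = 1` equals
`2ζᵏ/(1+ζ^{2k})`, attained by the rescaled Chebyshev polynomial. -/
theorem chebyshev_minimax (σ : ℝ) (hσ0 : 0 < σ) (hσ1 : σ < 1) (k : ℕ) (hk : 1 ≤ k)
    (ζ : ℝ) (hζ : ζ = (1 - Real.sqrt (1 - σ)) / (1 + Real.sqrt (1 - σ)))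
    (T : Polynomial ℝ)
    (hT : T = Polynomial.C (((Polynomial.Chebyshev.T ℝ (k : ℤ)).eval ((2 - σ) / σ))⁻¹) *
      ((Polynomial.Chebyshev.T ℝ (k : ℤ)).comp (Polynomial.C (2 / σ) * Polynomial.X - 1))) :
    IsLeast {y : ℝ | ∃ p : Polynomial ℝ, p.natDegree ≤ k ∧ p.eval 1 = 1 ∧
        y = sSup ((fun x => |p.eval x|) '' Set.Icc 0 σ)}
      (2 * ζ ^ k / (1 + ζ ^ (2 * k))) ∧
    T.natDegree ≤ k ∧ T.eval 1 = 1 ∧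
    sSup ((fun x => |T.eval x|) '' Set.Icc 0 σ) = 2 * ζ ^ k / (1 + ζ ^ (2 * k)) :=
  chebyshev_minimax_general σ hσ0 hσ1 k ζ hζ T hT
end

section
/- Let U ∈ ℝ^{n×m} and Ũ = U + E ∈ ℝ^{n×m}, set M = ŨᵀŨ and P = ŨᵀŨ − UᵀU, and assume both UᵀU and M are positive definite. Let c* be the unique minimizer of ‖Uc‖₂ over c ∈ ℝ^m with 𝟏ᵀc = 1, and let c* + Δc be the unique minimizer of ‖Ũc‖₂ over c ∈ ℝ^m with 𝟏ᵀc = 1. Then Δc = −(I − M⁻¹𝟏𝟏ᵀ/(𝟏ᵀM⁻¹𝟏)) M⁻¹ P c*. -/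
/-!
Both minimizers are Lagrange points: first-order optimality along feasible directions forces
`UᵀU c* = a 𝟏` and `M c₁ = b 𝟏` for the perturbed minimizer `c₁ = c* + Δc`, hence
`c₁ = M⁻¹𝟏 / (𝟏ᵀM⁻¹𝟏)`. Then `M⁻¹ P c* = c* - a M⁻¹𝟏`, and the oblique projector
`I - M⁻¹𝟏𝟏ᵀ / (𝟏ᵀM⁻¹𝟏)` annihilates `M⁻¹𝟏` and maps `c*` (with `𝟏ᵀc* = 1`) to `c* - c₁`.
-/

open Matrix

theorem euclNorm_le_euclNorm_iff {n : ℕ} {v w : Fin n → ℝ} :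
    euclNorm v ≤ euclNorm w ↔ v ⬝ᵥ v ≤ w ⬝ᵥ w := by
  simp only [euclNorm, dotProduct, ← sq]
  exact Real.sqrt_le_sqrt_iff (Finset.sum_nonneg fun i _ => sq_nonneg (w i))

theorem dotProduct_eq_zero_of_forall_le_add_smul {ι : Type*} [Fintype ι] {x y : ι → ℝ}
    (h : ∀ t : ℝ, x ⬝ᵥ x ≤ (x + t • y) ⬝ᵥ (x + t • y)) : x ⬝ᵥ y = 0 := by
  have hnonneg : ∀ t : ℝ, 0 ≤ (y ⬝ᵥ y) * (t * t) + 2 * (x ⬝ᵥ y) * t + 0 := fun t => by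
    have := h t
    simp only [add_dotProduct, dotProduct_add, smul_dotProduct, dotProduct_smul, smul_eq_mul,
      dotProduct_comm y x] at this
    linarith
  have := discrim_le_zero hnonneg
  rw [discrim] at this
  nlinarith

theorem eq_smul_of_forall_dotProduct_eq_zero {ι R : Type*} [Fintype ι] [DecidableEq ι]
    [CommRing R] {s c v : ι → R} (hc : s ⬝ᵥ c = 1)
    (h : ∀ w, s ⬝ᵥ w = 0 → v ⬝ᵥ w = 0) : v = (v ⬝ᵥ c) • s := by
  ext i
  have := h (Pi.single i 1 - s i • c) (by
    rw [dotProduct_sub, dotProduct_single, dotProduct_smul, hc, smul_eq_mul, mul_one,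
      sub_self])
  rw [dotProduct_sub, dotProduct_single, dotProduct_smul, smul_eq_mul, mul_one,
    sub_eq_zero] at this
  rw [this, Pi.smul_apply, smul_eq_mul, mul_comm]

theorem exists_mulVec_eq_smul_of_isMinOn {κ ι : Type*} [Fintype κ] [Fintype ι] [DecidableEq ι]
    {A : Matrix κ ι ℝ} {s c : ι → ℝ} (hc : s ⬝ᵥ c = 1)
    (hmin : IsMinOn (fun c => (A *ᵥ c) ⬝ᵥ (A *ᵥ c)) {c | s ⬝ᵥ c = 1} c) :
    ∃ a : ℝ, (Aᵀ * A) *ᵥ c = a • s := by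
  refine ⟨_, eq_smul_of_forall_dotProduct_eq_zero hc fun w hw => ?_⟩
  have hfeasible : ∀ t : ℝ, s ⬝ᵥ (c + t • w) = 1 := fun t => by
    rw [dotProduct_add, dotProduct_smul, hw, smul_zero, add_zero, hc]
  have horth : (A *ᵥ c) ⬝ᵥ (A *ᵥ w) = 0 := dotProduct_eq_zero_of_forall_le_add_smul fun t => by
    have := isMinOn_iff.mp hmin _ (hfeasible t)
    rwa [mulVec_add, mulVec_smul] at this
  rwa [← mulVec_mulVec, mulVec_transpose, ← dotProduct_mulVec]

theorem sub_eq_neg_mulVec_of_mulVec_eq_smul {ι K : Type*} [Fintype ι] [DecidableEq ι] [Field K]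
    {M N : Matrix ι ι K} (hM : IsUnit M.det) {s c₀ c₁ : ι → K} {a b : K}
    (hc₀ : N *ᵥ c₀ = a • s) (hs₀ : s ⬝ᵥ c₀ = 1) (hc₁ : M *ᵥ c₁ = b • s) (hs₁ : s ⬝ᵥ c₁ = 1) :
    c₁ - c₀ = -((1 - (s ⬝ᵥ M⁻¹ *ᵥ s)⁻¹ • (M⁻¹ * vecMulVec s s)) * M⁻¹ * (M - N)) *ᵥ c₀ := by
  set u := M⁻¹ *ᵥ s
  set β := s ⬝ᵥ u
  have hc₁u : c₁ = b • u := calc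
    c₁ = (M⁻¹ * M) *ᵥ c₁ := by rw [nonsing_inv_mul M hM, one_mulVec]
    _ = b • u := by rw [← mulVec_mulVec, hc₁, mulVec_smul]
  have hbβ : b * β = 1 := by rw [← hs₁, hc₁u, dotProduct_smul, smul_eq_mul]
  have hβ : β ≠ 0 := right_ne_zero_of_mul_eq_one hbβ
  have hx : M⁻¹ *ᵥ ((M - N) *ᵥ c₀) = c₀ - a • u := by
    rw [sub_mulVec, hc₀, mulVec_sub, mulVec_mulVec, nonsing_inv_mul M hM, one_mulVec, mulVec_smul]
  have hproj : ∀ x, (1 - β⁻¹ • (M⁻¹ * vecMulVec s s)) *ᵥ x = x - (β⁻¹ * (s ⬝ᵥ x)) • u := by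
    intro x
    rw [sub_mulVec, one_mulVec, smul_mulVec, ← mulVec_mulVec, vecMulVec_mulVec, op_smul_eq_smul,
      mulVec_smul, smul_smul]
  have hcoef : β⁻¹ * (s ⬝ᵥ (c₀ - a • u)) = b - a := by
    rw [dotProduct_sub, hs₀, dotProduct_smul, smul_eq_mul, mul_sub, mul_one, mul_left_comm,
      inv_mul_cancel₀ hβ, mul_one, ← eq_inv_of_mul_eq_one_left hbβ]
  rw [neg_mulVec, ← mulVec_mulVec, ← mulVec_mulVec, hx, hproj, hcoef, hc₁u]
  module

theorem ampe_perturbation_general {n m : ℕ} (U Ut : Matrix (Fin n) (Fin m) ℝ)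
    (M : Matrix (Fin m) (Fin m) ℝ) (hM : M = Utᵀ * Ut)
    (P : Matrix (Fin m) (Fin m) ℝ) (hP : P = Utᵀ * Ut - Uᵀ * U)
    (hMpd : M.PosDef)
    (cstar Δc : Fin m → ℝ)
    (hc1 : ∑ i, cstar i = 1)
    (hcmin : ∀ c : Fin m → ℝ, ∑ i, c i = 1 →
      euclNorm (U.mulVec cstar) ≤ euclNorm (U.mulVec c))
    (hd1 : ∑ i, (cstar + Δc) i = 1)
    (hdmin : ∀ c : Fin m → ℝ, ∑ i, c i = 1 →
      euclNorm (Ut.mulVec (cstar + Δc)) ≤ euclNorm (Ut.mulVec c)) :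
    Δc = -((1 - ((fun _ => (1 : ℝ)) ⬝ᵥ M⁻¹ *ᵥ (fun _ => (1 : ℝ)))⁻¹ •
        (M⁻¹ * Matrix.of (fun _ _ => (1 : ℝ)))) * M⁻¹ * P) *ᵥ cstar := by
  have hsum (c : Fin m → ℝ) : ∑ i, c i = 1 ⬝ᵥ c := (one_dotProduct c).symm
  have isMinOn_of {A : Matrix (Fin n) (Fin m) ℝ} {c₀ : Fin m → ℝ}
      (h : ∀ c : Fin m → ℝ, ∑ i, c i = 1 → euclNorm (A *ᵥ c₀) ≤ euclNorm (A *ᵥ c)) :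
      IsMinOn (fun c => (A *ᵥ c) ⬝ᵥ (A *ᵥ c)) {c | 1 ⬝ᵥ c = 1} c₀ :=
    isMinOn_iff.mpr fun c hc => euclNorm_le_euclNorm_iff.mp (h c ((hsum c).trans hc))
  rw [hsum] at hc1 hd1
  obtain ⟨a, hNc⟩ := exists_mulVec_eq_smul_of_isMinOn hc1 (isMinOn_of hcmin)
  obtain ⟨b, hMc⟩ := exists_mulVec_eq_smul_of_isMinOn hd1 (isMinOn_of hdmin)
  subst hM hP
  have hΔc := sub_eq_neg_mulVec_of_mulVec_eq_smul (isUnit_iff_ne_zero.mpr hMpd.det_pos.ne')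
    hNc hc1 hMc hd1
  have hJ : vecMulVec 1 1 = (of fun _ _ => 1 : Matrix (Fin m) (Fin m) ℝ) := by
    ext; simp [vecMulVec_apply]
  rwa [add_sub_cancel_left, hJ] at hΔc

/-- Perturbation of the AMPE solution: if `c*` minimizes `‖Uc‖₂` over `𝟏ᵀc = 1`
and `c* + Δc` minimizes `‖Ũc‖₂` over `𝟏ᵀc = 1` with `Ũ = U + E`, `M = ŨᵀŨ`, `P = ŨᵀŨ − UᵀU`,
then `Δc = −(I − M⁻¹𝟏𝟏ᵀ/(𝟏ᵀM⁻¹𝟏)) M⁻¹ P c*`. -/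
theorem ampe_perturbation {n m : ℕ} (U E Ut : Matrix (Fin n) (Fin m) ℝ)
    (hUt : Ut = U + E)
    (M : Matrix (Fin m) (Fin m) ℝ) (hM : M = Utᵀ * Ut)
    (P : Matrix (Fin m) (Fin m) ℝ) (hP : P = Utᵀ * Ut - Uᵀ * U)
    (hUpd : (Uᵀ * U).PosDef) (hMpd : M.PosDef)
    (cstar Δc : Fin m → ℝ)
    (hc1 : ∑ i, cstar i = 1)
    (hcmin : ∀ c : Fin m → ℝ, ∑ i, c i = 1 →
      euclNorm (U.mulVec cstar) ≤ euclNorm (U.mulVec c))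
    (hd1 : ∑ i, (cstar + Δc) i = 1)
    (hdmin : ∀ c : Fin m → ℝ, ∑ i, c i = 1 →
      euclNorm (Ut.mulVec (cstar + Δc)) ≤ euclNorm (Ut.mulVec c)) :
    Δc = -((1 - ((fun _ => (1 : ℝ)) ⬝ᵥ M⁻¹ *ᵥ (fun _ => (1 : ℝ)))⁻¹ •
        (M⁻¹ * Matrix.of (fun _ _ => (1 : ℝ)))) * M⁻¹ * P) *ᵥ cstar :=
  ampe_perturbation_general U Ut M hM P hP hMpd cstar Δc hc1 hcmin hd1 hdmin
end

section
/- Let U ∈ ℝ^{n×k} with k ≥ 1, let λ > 0, and let 𝟏 ∈ ℝ^k be the all-ones vector. Then the unique minimizer c*_λ of cᵀ(UᵀU + λI)c over c ∈ ℝ^k with 𝟏ᵀc = 1 is c*_λ = (UᵀU + λI)⁻¹𝟏 / (𝟏ᵀ(UᵀU + λI)⁻¹𝟏), and its Euclidean norm satisfies ‖c*_λ‖₂ ≤ √((λ + ‖U‖₂²)/(kλ)), where ‖U‖₂ is the spectral norm of U. -/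
/-!
Lagrange: `N c` is a multiple of `a`, so for every `d` with `a ⬝ᵥ d = 1` the cross terms
vanish and `dᵀ N d = cᵀ N c + (d - c)ᵀ N (d - c)`; positive definiteness of `N` gives minimality
and uniqueness.
For `N = UᵀU + λI`, comparing `c` with the uniform weights `e = 𝟏 / k` gives
`λ ‖c‖² ≤ cᵀ N c ≤ eᵀ N e ≤ (λ + ‖U‖²) ‖e‖² = (λ + ‖U‖²) / k`.
-/

open scoped Matrix.Norms.L2Operator
open Matrix

theorem EuclideanSpace.norm_toLp_sq_eq_dotProduct {κ : Type*} [Fintype κ] (y : κ → ℝ) :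
    ‖WithLp.toLp 2 y‖ ^ 2 = y ⬝ᵥ y := by
  rw [EuclideanSpace.real_norm_sq_eq]
  simp only [dotProduct, sq]

namespace Matrix

variable {ι m : Type*} [Fintype ι] [Fintype m]

noncomputable def minimizerOnHyperplane [DecidableEq ι] (N : Matrix ι ι ℝ) (a : ι → ℝ) : ι → ℝ :=
  (a ⬝ᵥ N⁻¹ *ᵥ a)⁻¹ • N⁻¹ *ᵥ a

theorem IsSymm.dotProduct_mulVec_eq_add_of_mulVec_eq_smul {N : Matrix ι ι ℝ} (hN : N.IsSymm)
    {a c d : ι → ℝ} {μ : ℝ} (hc : N *ᵥ c = μ • a) (hd : a ⬝ᵥ d = a ⬝ᵥ c) :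
    d ⬝ᵥ N *ᵥ d = c ⬝ᵥ N *ᵥ c + (d - c) ⬝ᵥ N *ᵥ (d - c) := by
  have he : (d - c) ⬝ᵥ N *ᵥ c = 0 := by
    rw [hc, dotProduct_smul, dotProduct_comm, dotProduct_sub, hd, sub_self, smul_zero]
  have he' : c ⬝ᵥ N *ᵥ (d - c) = 0 := by
    rw [dotProduct_mulVec, ← hN.eq, vecMul_transpose, dotProduct_comm, he]
  calc d ⬝ᵥ N *ᵥ d = (c + (d - c)) ⬝ᵥ N *ᵥ (c + (d - c)) := by rw [add_sub_cancel]
    _ = _ := by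
      simp only [mulVec_add, dotProduct_add, add_dotProduct, he, he', add_zero, zero_add]

variable [DecidableEq ι] {N : Matrix ι ι ℝ} {a d : ι → ℝ}

namespace PosDef

theorem dotProduct_inv_mulVec_pos (hN : N.PosDef) (ha : a ≠ 0) : 0 < a ⬝ᵥ N⁻¹ *ᵥ a := by
  simpa using hN.inv.dotProduct_mulVec_pos ha

theorem mulVec_minimizerOnHyperplane (hN : N.PosDef) :
    N *ᵥ minimizerOnHyperplane N a = (a ⬝ᵥ N⁻¹ *ᵥ a)⁻¹ • a := by
  rw [minimizerOnHyperplane, mulVec_smul, mulVec_mulVec,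
    mul_nonsing_inv _ ((isUnit_iff_isUnit_det N).mp hN.isUnit), one_mulVec]

theorem dotProduct_minimizerOnHyperplane (hN : N.PosDef) (ha : a ≠ 0) :
    a ⬝ᵥ minimizerOnHyperplane N a = 1 := by
  rw [minimizerOnHyperplane, dotProduct_smul, smul_eq_mul,
    inv_mul_cancel₀ (hN.dotProduct_inv_mulVec_pos ha).ne']

theorem dotProduct_mulVec_eq_minimizerOnHyperplane_add (hN : N.PosDef) (ha : a ≠ 0)
    (hd : a ⬝ᵥ d = 1) :
    d ⬝ᵥ N *ᵥ d = minimizerOnHyperplane N a ⬝ᵥ N *ᵥ minimizerOnHyperplane N a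
      + (d - minimizerOnHyperplane N a) ⬝ᵥ N *ᵥ (d - minimizerOnHyperplane N a) :=
  IsSymm.dotProduct_mulVec_eq_add_of_mulVec_eq_smul (N := N)
    (by simpa [IsHermitian, IsSymm] using hN.isHermitian) hN.mulVec_minimizerOnHyperplane
    (by rw [hd, hN.dotProduct_minimizerOnHyperplane ha])

theorem minimizerOnHyperplane_le (hN : N.PosDef) (ha : a ≠ 0) (hd : a ⬝ᵥ d = 1) :
    minimizerOnHyperplane N a ⬝ᵥ N *ᵥ minimizerOnHyperplane N a ≤ d ⬝ᵥ N *ᵥ d := by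
  rw [hN.dotProduct_mulVec_eq_minimizerOnHyperplane_add ha hd, le_add_iff_nonneg_right]
  simpa using hN.posSemidef.dotProduct_mulVec_nonneg (d - minimizerOnHyperplane N a)

theorem eq_minimizerOnHyperplane (hN : N.PosDef) (ha : a ≠ 0) (hd : a ⬝ᵥ d = 1)
    (hle : d ⬝ᵥ N *ᵥ d ≤ minimizerOnHyperplane N a ⬝ᵥ N *ᵥ minimizerOnHyperplane N a) :
    d = minimizerOnHyperplane N a := by
  rw [hN.dotProduct_mulVec_eq_minimizerOnHyperplane_add ha hd, add_le_iff_nonpos_right] at hle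
  by_contra hne
  simpa using hle.trans_lt (hN.dotProduct_mulVec_pos (sub_ne_zero_of_ne hne))

end PosDef

theorem posDef_transpose_mul_self_add_smul_one (U : Matrix m ι ℝ) {lam : ℝ} (hlam : 0 < lam) :
    (Uᵀ * U + lam • 1).PosDef :=
  PosDef.posSemidef_add (conjTranspose_eq_transpose_of_trivial U ▸
    posSemidef_conjTranspose_mul_self U) (PosDef.one.smul hlam)

theorem dotProduct_transpose_mul_self_add_smul_one_mulVec (U : Matrix m ι ℝ) (lam : ℝ)
    (x : ι → ℝ) :
    x ⬝ᵥ (Uᵀ * U + lam • 1) *ᵥ x = (U *ᵥ x) ⬝ᵥ (U *ᵥ x) + lam * (x ⬝ᵥ x) := by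
  rw [add_mulVec, dotProduct_add, ← mulVec_mulVec, dotProduct_mulVec, vecMul_transpose,
    smul_mulVec, one_mulVec, dotProduct_smul, smul_eq_mul]

theorem dotProduct_self_mulVec_le_l2_opNorm_sq (U : Matrix m ι ℝ) (x : ι → ℝ) :
    (U *ᵥ x) ⬝ᵥ (U *ᵥ x) ≤ ‖U‖ ^ 2 * (x ⬝ᵥ x) := by
  rw [← EuclideanSpace.norm_toLp_sq_eq_dotProduct, ← EuclideanSpace.norm_toLp_sq_eq_dotProduct,
    ← mul_pow]
  exact pow_le_pow_left₀ (norm_nonneg _) (l2_opNorm_mulVec U _) 2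

theorem mul_dotProduct_minimizerOnHyperplane_self_le (U : Matrix m ι ℝ) {lam : ℝ} (hlam : 0 < lam)
    (ha : a ≠ 0) (hd : a ⬝ᵥ d = 1) :
    lam * (minimizerOnHyperplane (Uᵀ * U + lam • 1) a ⬝ᵥ
        minimizerOnHyperplane (Uᵀ * U + lam • 1) a) ≤ (lam + ‖U‖ ^ 2) * (d ⬝ᵥ d) := by
  set c := minimizerOnHyperplane (Uᵀ * U + lam • 1) a
  calc lam * (c ⬝ᵥ c) ≤ (U *ᵥ c) ⬝ᵥ (U *ᵥ c) + lam * (c ⬝ᵥ c) :=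
        le_add_of_nonneg_left (Finset.sum_nonneg fun i _ => mul_self_nonneg _)
    _ = c ⬝ᵥ (Uᵀ * U + lam • 1) *ᵥ c :=
        (dotProduct_transpose_mul_self_add_smul_one_mulVec ..).symm
    _ ≤ d ⬝ᵥ (Uᵀ * U + lam • 1) *ᵥ d :=
        (posDef_transpose_mul_self_add_smul_one U hlam).minimizerOnHyperplane_le ha hd
    _ = (U *ᵥ d) ⬝ᵥ (U *ᵥ d) + lam * (d ⬝ᵥ d) :=
        dotProduct_transpose_mul_self_add_smul_one_mulVec ..
    _ ≤ ‖U‖ ^ 2 * (d ⬝ᵥ d) + lam * (d ⬝ᵥ d) := by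
        gcongr; exact dotProduct_self_mulVec_le_l2_opNorm_sq U d
    _ = (lam + ‖U‖ ^ 2) * (d ⬝ᵥ d) := by ring

end Matrix

theorem euclNorm_eq_sqrt_dotProduct {n : ℕ} (v : Fin n → ℝ) : euclNorm v = √(v ⬝ᵥ v) := by
  simp only [euclNorm, dotProduct, sq]

/-- Closed form and norm bound for the solution of the regularized AMPE problem
`min cᵀ(UᵀU + λI)c  s.t. 𝟏ᵀc = 1`. -/
theorem rmpe_solution {n k : ℕ} (hk : 1 ≤ k) (U : Matrix (Fin n) (Fin k) ℝ)
    (lam : ℝ) (hlam : 0 < lam)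
    (N : Matrix (Fin k) (Fin k) ℝ)
    (hN : N = Uᵀ * U + lam • (1 : Matrix (Fin k) (Fin k) ℝ))
    (c : Fin k → ℝ)
    (hc : c = ((fun _ => (1 : ℝ)) ⬝ᵥ N⁻¹ *ᵥ (fun _ => (1 : ℝ)))⁻¹ •
      N⁻¹ *ᵥ (fun _ => (1 : ℝ))) :
    (∑ i, c i = 1) ∧
    (∀ d : Fin k → ℝ, ∑ i, d i = 1 → c ⬝ᵥ N *ᵥ c ≤ d ⬝ᵥ N *ᵥ d) ∧
    (∀ d : Fin k → ℝ, ∑ i, d i = 1 → d ⬝ᵥ N *ᵥ d ≤ c ⬝ᵥ N *ᵥ c → d = c) ∧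
    euclNorm c ≤ Real.sqrt ((lam + ‖U‖ ^ 2) / (k * lam)) := by
  have hNpos : N.PosDef := hN ▸ posDef_transpose_mul_self_add_smul_one U hlam
  have hc : c = minimizerOnHyperplane N 1 := hc
  have hone : (1 : Fin k → ℝ) ≠ 0 := fun h => by simpa using congrFun h ⟨0, hk⟩
  have hk_pos : (0 : ℝ) < k := by exact_mod_cast hk
  simp only [← one_dotProduct, hc]
  refine ⟨hNpos.dotProduct_minimizerOnHyperplane hone,
    fun d hd => hNpos.minimizerOnHyperplane_le hone hd,
    fun d hd => hNpos.eq_minimizerOnHyperplane hone hd, ?_⟩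
  set e : Fin k → ℝ := (k : ℝ)⁻¹ • 1
  have he : 1 ⬝ᵥ e = 1 := by simp [e, one_dotProduct, hk_pos.ne']
  have hee : e ⬝ᵥ e = (k : ℝ)⁻¹ := by
    simp only [e, dotProduct_smul, smul_dotProduct, one_dotProduct_one, Fintype.card_fin,
      smul_eq_mul]
    field_simp
  have hbound := hN ▸ mul_dotProduct_minimizerOnHyperplane_self_le U hlam hone he
  rw [hee] at hbound
  rw [euclNorm_eq_sqrt_dotProduct]
  refine Real.sqrt_le_sqrt ?_
  rw [div_mul_eq_div_div, le_div_iff₀ hlam, div_eq_mul_inv]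
  linarith
end

section
/- Let 0 < μ ≤ L and set β = (1 − √(μ/L))/(1 + √(μ/L)), r = 1 − √(μ/L), and σ = 1 − μ/L. Then σ((1+β)r − β) ≤ r². -/
/-- With `β = (1−√(μ/L))/(1+√(μ/L))`, `r = 1−√(μ/L)`, `σ = 1−μ/L`,
Nesterov's coefficients satisfy `σ((1+β)r − β) ≤ r²`. -/
theorem nesterov_rate_condition (μ L β r σ : ℝ) (hμ : 0 < μ) (hμL : μ ≤ L)
    (hβ : β = (1 - Real.sqrt (μ / L)) / (1 + Real.sqrt (μ / L)))
    (hr : r = 1 - Real.sqrt (μ / L)) (hσ : σ = 1 - μ / L) :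
    σ * ((1 + β) * r - β) ≤ r ^ 2 := by
  have hL : 0 < L := lt_of_lt_of_le hμ hμL
  set s := Real.sqrt (μ / L) with hs
  have hs0 : 0 ≤ s := Real.sqrt_nonneg _
  have hs2 : s ^ 2 = μ / L := Real.sq_sqrt (by positivity)
  have h1 : (1 : ℝ) + s ≠ 0 := by positivity
  have hσ' : σ = 1 - s ^ 2 := by rw [hσ, hs2]
  rw [hβ, hr, hσ']
  apply le_of_eq
  field_simp
  ring
end

section
/- Under the same assumptions (f twice continuously differentiable with μI ⪯ ∇²f ⪯ LI, 0 < μ ≤ L, M-Lipschitz Hessian, minimizer x*, gradient iterates x̃_{i+1} = x̃_i − (1/L)∇f(x̃_i) with ‖x̃_i − x*‖₂ ≤ r^i‖x₀−x*‖₂ for r = √((L−μ)/(L+μ)), and linear-model iterates x_{i+1} = x* + (I − ∇²f(x*)/L)(x_i − x*), both started at x₀), for every k ≥ 0 the accumulated deviation satisfies Σ_{i=0}^{k} ‖x_i − x̃_i‖₂ ≤ (1 + L/μ)² · (M/(2L)) · (1/2 − (1 − μ/L)^k + (1/2)((1 − μ/L)/(1 + μ/L))^k) · ‖x₀ − x*‖₂².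 -/
/-!
Write `H = ∇²f(x*)` and `eᵢ = xᵢ - x̃ᵢ`. Since `∇f(x*) = 0`,
`eᵢ₊₁ = (I - H/L) eᵢ + (1/L) (∇f(x̃ᵢ) - H (x̃ᵢ - x*))`.
The Hessian is symmetric with Rayleigh quotients in `[μ, L]`, so `‖I - H/L‖ ≤ 1 - μ/L`; Taylor's
formula with an `M`-Lipschitz Hessian bounds the second term by
`M/(2L) ‖x̃ᵢ - x*‖² ≤ M/(2L) r^(2i) ‖x₀ - x*‖²`. Hence `‖eᵢ‖` is dominated by the solution of a
scalar linear recurrence with geometric forcing, and summing an explicit majorant of that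
solution gives the bound.
-/

open scoped RealInnerProductSpace

section Taylor

variable {E F : Type*} [NormedAddCommGroup E] [NormedSpace ℝ E]
  [NormedAddCommGroup F] [NormedSpace ℝ F]

theorem norm_sub_sub_fderiv_apply_le_of_lipschitz {g : E → F} {g' : E → E →L[ℝ] F} {M : ℝ}
    {x : E} (hg : ∀ z, HasFDerivAt g (g' z) z) (hlip : ∀ z, ‖g' z - g' x‖ ≤ M * ‖z - x‖)
    (y : E) : ‖g y - g x - g' x (y - x)‖ ≤ M / 2 * ‖y - x‖ ^ 2 := by
  set u := y - x
  let φ : ℝ → F := fun t ↦ g (x + t • u) - g x - t • g' x u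
  have hφ : ∀ t, HasDerivAt φ (g' (x + t • u) u - g' x u) t := by
    intro t
    have hline : HasDerivAt (fun s : ℝ ↦ x + s • u) u t := by
      simpa using ((hasDerivAt_id t).smul_const u).const_add x
    have hlin : HasDerivAt (fun s : ℝ ↦ s • g' x u) (g' x u) t := by
      simpa using (hasDerivAt_id t).smul_const (g' x u)
    exact (((hg _).comp_hasDerivAt t hline).sub_const (g x)).sub hlin
  have hB : ∀ t, HasDerivAt (fun t : ℝ ↦ M / 2 * t ^ 2 * ‖u‖ ^ 2) (M * t * ‖u‖ ^ 2) t := fun t ↦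
    (((hasDerivAt_pow 2 t).const_mul (M / 2)).mul_const (‖u‖ ^ 2)).congr_deriv (by push_cast; ring)
  have hbound : ∀ t ∈ Set.Ico (0 : ℝ) 1, ‖g' (x + t • u) u - g' x u‖ ≤ M * t * ‖u‖ ^ 2 := by
    rintro t ⟨ht0, -⟩
    calc ‖g' (x + t • u) u - g' x u‖ = ‖(g' (x + t • u) - g' x) u‖ := rfl
      _ ≤ ‖g' (x + t • u) - g' x‖ * ‖u‖ := ContinuousLinearMap.le_opNorm _ _
      _ ≤ M * (t * ‖u‖) * ‖u‖ := by
        gcongr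
        simpa [norm_smul, abs_of_nonneg ht0] using hlip (x + t • u)
      _ = M * t * ‖u‖ ^ 2 := by ring
  have := image_norm_le_of_norm_deriv_right_le_deriv_boundary (f := φ)
    (fun t _ ↦ (hφ t).continuousAt.continuousWithinAt) (fun t _ ↦ (hφ t).hasDerivWithinAt)
    (by simp [φ]) hB hbound (Set.right_mem_Icc.2 zero_le_one)
  simpa [φ, u] using this

end Taylor

section Gradient

variable {E : Type*} [NormedAddCommGroup E] [InnerProductSpace ℝ E] [CompleteSpace E]
  {f : E → ℝ} {x : E}

theorem IsLocalMin.gradient_eq_zero (h : IsLocalMin f x) : gradient f x = 0 := by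
  simp [gradient, h.fderiv_eq_zero]

theorem ContDiff.differentiable_gradient (hf : ContDiff ℝ 2 f) : Differentiable ℝ (gradient f) :=
  ((InnerProductSpace.toDual ℝ E).symm.contDiff.comp
    (hf.fderiv_right (m := 1) (by norm_num))).differentiable one_ne_zero

theorem inner_fderiv_gradient_apply (v w : E) :
    ⟪fderiv ℝ (gradient f) x v, w⟫ = fderiv ℝ (fderiv ℝ f) x v w := by
  have : gradient f = (InnerProductSpace.toDual ℝ E).symm ∘ fderiv ℝ f := rfl
  rw [this, LinearIsometryEquiv.comp_fderiv]
  exact InnerProductSpace.toDual_symm_apply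

theorem isSymmetric_fderiv_gradient (hf : ContDiffAt ℝ 2 f x) :
    (fderiv ℝ (gradient f) x : E →ₗ[ℝ] E).IsSymmetric := by
  intro v w
  simp only [ContinuousLinearMap.coe_coe]
  rw [← real_inner_comm v, inner_fderiv_gradient_apply, inner_fderiv_gradient_apply,
    (hf.isSymmSndFDerivAt (by simp)).eq]

end Gradient

section Contraction

variable {E : Type*} [NormedAddCommGroup E] [InnerProductSpace ℝ E]

theorem ContinuousLinearMap.opNorm_le_of_abs_inner_le {T : E →L[ℝ] E}
    (hT : (T : E →ₗ[ℝ] E).IsSymmetric) {c : ℝ} (hc : 0 ≤ c) (h : ∀ v, |⟪T v, v⟫| ≤ c * ‖v‖ ^ 2) :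
    ‖T‖ ≤ c := by
  rw [T.norm_eq_iSup_rayleighQuotient hT]
  refine ciSup_le fun v ↦ ?_
  rcases eq_or_ne v 0 with rfl | hv
  · simpa using hc
  · rw [rayleighQuotient, reApplyInnerSelf_apply, abs_div, abs_sq,
      div_le_iff₀ (by positivity)]
    exact h v

theorem norm_sub_one_div_smul_apply_le_of_inner_bounds {H : E →L[ℝ] E}
    (hH : (H : E →ₗ[ℝ] E).IsSymmetric) {μ L : ℝ} (hL : 0 < L) (hμL : μ ≤ L)
    (hlow : ∀ v, μ * ‖v‖ ^ 2 ≤ ⟪H v, v⟫) (hup : ∀ v, ⟪H v, v⟫ ≤ L * ‖v‖ ^ 2) (v : E) :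
    ‖v - (1 / L) • H v‖ ≤ (1 - μ / L) * ‖v‖ := by
  set T := ContinuousLinearMap.id ℝ E - (1 / L) • H
  have hc : 0 ≤ 1 - μ / L := by rwa [sub_nonneg, div_le_one hL]
  have hT : (T : E →ₗ[ℝ] E).IsSymmetric :=
    LinearMap.IsSymmetric.id.sub (hH.smul (conj_trivial _))
  have hquad : ∀ v, |⟪T v, v⟫| ≤ (1 - μ / L) * ‖v‖ ^ 2 := by
    intro v
    have hTv : ⟪T v, v⟫ = ‖v‖ ^ 2 - ⟪H v, v⟫ / L := by
      simp [T, inner_sub_left, real_inner_smul_left, div_eq_inv_mul]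
    have hHv_le : ⟪H v, v⟫ / L ≤ ‖v‖ ^ 2 := by rw [div_le_iff₀ hL]; linarith [hup v]
    have hHv_ge : μ / L * ‖v‖ ^ 2 ≤ ⟪H v, v⟫ / L := by
      rw [div_mul_eq_mul_div, div_le_div_iff_of_pos_right hL]; exact hlow v
    rw [hTv, abs_le]
    constructor <;> linarith [mul_nonneg hc (sq_nonneg ‖v‖)]
  calc ‖v - (1 / L) • H v‖ = ‖T v‖ := rfl
    _ ≤ ‖T‖ * ‖v‖ := T.le_opNorm v
    _ ≤ (1 - μ / L) * ‖v‖ := by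
      gcongr
      exact T.opNorm_le_of_abs_inner_le hT hc hquad

end Contraction

theorem norm_linearized_step_sub_step_le {E : Type*} [NormedAddCommGroup E] [NormedSpace ℝ E]
    {g : E → E} {H : E →L[ℝ] E} {c a δ : ℝ} (hc : 0 ≤ c) (hH : ∀ v, ‖v - c • H v‖ ≤ a * ‖v‖)
    {xstar y : E} (hg : ‖g y - H (y - xstar)‖ ≤ δ) (z : E) :
    ‖(xstar + (z - xstar) - c • H (z - xstar)) - (y - c • g y)‖ ≤ a * ‖z - y‖ + c * δ := by
  have hsplit : (xstar + (z - xstar) - c • H (z - xstar)) - (y - c • g y) =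
      ((z - y) - c • H (z - y)) + c • (g y - H (y - xstar)) := by
    rw [show z - xstar = (z - y) + (y - xstar) by abel, map_add, smul_sub, smul_add]
    abel
  calc _ ≤ ‖(z - y) - c • H (z - y)‖ + ‖c • (g y - H (y - xstar))‖ := hsplit ▸ norm_add_le _ _
    _ ≤ a * ‖z - y‖ + c * δ := by
      rw [norm_smul, Real.norm_of_nonneg hc]
      gcongr
      exact hH _

section Recurrence

/-- With `a = 1 - t` and `b = (1 - t) / (1 + t)`, this is `1 + t` times
`((1 + t) * a ^ k - b ^ k) / t = ∑ j ∈ range (k + 1), a ^ (k - j) * b ^ j`, the solution of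
`s (k + 1) = a * s k + b ^ k`, `s 0 = 0`, at `k + 1`. The factor `1 + t` is the slack that
produces the constant `(1 + L / μ) ^ 2` of the theorem. -/
noncomputable def recurrenceMajorant (t : ℝ) (k : ℕ) : ℝ :=
  (1 + t) ^ 2 / t * (1 - t) ^ k - (1 + t) / t * ((1 - t) / (1 + t)) ^ k

variable {t : ℝ}

theorem one_le_recurrenceMajorant_zero (ht : 0 < t) : 1 ≤ recurrenceMajorant t 0 := by
  have : recurrenceMajorant t 0 = 1 + t := by
    simp only [recurrenceMajorant, pow_zero, mul_one]
    field_simp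
    ring
  linarith

theorem recurrenceMajorant_succ_ge (ht0 : 0 < t) (ht1 : t ≤ 1) (k : ℕ) :
    (1 - t) * recurrenceMajorant t k + ((1 - t) / (1 + t)) ^ (k + 1) ≤
      recurrenceMajorant t (k + 1) := by
  have hb : (1 - t) / (1 + t) * (1 + t) = 1 - t := div_mul_cancel₀ _ (by linarith)
  set b := (1 - t) / (1 + t)
  have hgap : recurrenceMajorant t (k + 1) - ((1 - t) * recurrenceMajorant t k + b ^ (k + 1)) =
      t * b ^ (k + 1) := by
    simp only [recurrenceMajorant]
    field_simp
    linear_combination (-(1 + t) * b ^ k) * hb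
  have : 0 ≤ t * b ^ (k + 1) := by
    have : 0 ≤ b := div_nonneg (by linarith) (by linarith)
    positivity
  linarith

theorem sum_range_recurrenceMajorant (ht : 0 < t) (K : ℕ) :
    ∑ k ∈ Finset.range K, recurrenceMajorant t k =
      ((1 + t) / t) ^ 2 * (1 / 2 - (1 - t) ^ K + 1 / 2 * ((1 - t) / (1 + t)) ^ K) := by
  induction K with
  | zero => norm_num
  | succ K ih =>
    rw [Finset.sum_range_succ, ih, recurrenceMajorant]
    have hb : (1 - t) / (1 + t) * (1 + t) = 1 - t := div_mul_cancel₀ _ (by linarith)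
    generalize (1 - t) / (1 + t) = b at hb ⊢
    field_simp
    linear_combination (-b ^ K) * hb

theorem le_recurrenceMajorant {C : ℝ} (ht0 : 0 < t) (ht1 : t ≤ 1) (hC : 0 ≤ C) {e : ℕ → ℝ}
    (he0 : e 0 = 0) (he : ∀ i, e (i + 1) ≤ (1 - t) * e i + C * ((1 - t) / (1 + t)) ^ i) (k : ℕ) :
    e (k + 1) ≤ C * recurrenceMajorant t k := by
  induction k with
  | zero =>
    calc e 1 ≤ C := by simpa [he0] using he 0
      _ ≤ C * recurrenceMajorant t 0 :=
        le_mul_of_one_le_right hC (one_le_recurrenceMajorant_zero ht0)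
  | succ k ih =>
    calc e (k + 2)
      _ ≤ (1 - t) * (C * recurrenceMajorant t k) + C * ((1 - t) / (1 + t)) ^ (k + 1) := by
        grw [he (k + 1), ih]
        linarith
      _ = C * ((1 - t) * recurrenceMajorant t k + ((1 - t) / (1 + t)) ^ (k + 1)) := by ring
      _ ≤ C * recurrenceMajorant t (k + 1) := by gcongr; exact recurrenceMajorant_succ_ge ht0 ht1 k

theorem sum_range_succ_le_of_recurrence {C : ℝ} (ht0 : 0 < t) (ht1 : t ≤ 1) (hC : 0 ≤ C)
    {e : ℕ → ℝ} (he0 : e 0 = 0)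
    (he : ∀ i, e (i + 1) ≤ (1 - t) * e i + C * ((1 - t) / (1 + t)) ^ i) (K : ℕ) :
    ∑ i ∈ Finset.range (K + 1), e i ≤
      C * ((1 + t) / t) ^ 2 * (1 / 2 - (1 - t) ^ K + 1 / 2 * ((1 - t) / (1 + t)) ^ K) := by
  rw [Finset.sum_range_succ', he0, add_zero, mul_assoc, ← sum_range_recurrenceMajorant ht0,
    Finset.mul_sum]
  exact Finset.sum_le_sum fun k _ ↦ le_recurrenceMajorant ht0 ht1 hC he0 he k

end Recurrence

/-- Accumulated deviation of fixed-step gradient iterates from the asymptotic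
linear model, for an `L`-smooth `μ`-strongly convex function with `M`-Lipschitz Hessian. -/
theorem gradient_accumulated_error {n : ℕ} (μ L M : ℝ) (hμ : 0 < μ) (hμL : μ ≤ L)
    (f : EuclideanSpace ℝ (Fin n) → ℝ) (hf : ContDiff ℝ 2 f)
    (hess : EuclideanSpace ℝ (Fin n) → EuclideanSpace ℝ (Fin n) →L[ℝ] EuclideanSpace ℝ (Fin n))
    (hhess : ∀ x, hess x = fderiv ℝ (gradient f) x)
    (hlow : ∀ x v, μ * ‖v‖ ^ 2 ≤ ⟪hess x v, v⟫)
    (hup : ∀ x v, ⟪hess x v, v⟫ ≤ L * ‖v‖ ^ 2)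
    (hlip : ∀ x y, ‖hess y - hess x‖ ≤ M * ‖y - x‖)
    (xstar : EuclideanSpace ℝ (Fin n)) (hmin : ∀ y, f xstar ≤ f y)
    (x0 : EuclideanSpace ℝ (Fin n))
    (xt x : ℕ → EuclideanSpace ℝ (Fin n)) (hxt0 : xt 0 = x0) (hx0 : x 0 = x0)
    (hxt : ∀ i : ℕ, xt (i + 1) = xt i - (1 / L) • gradient f (xt i))
    (hx : ∀ i : ℕ, x (i + 1) = xstar + (x i - xstar) - (1 / L) • hess xstar (x i - xstar))
    (r : ℝ) (hr : r = Real.sqrt ((L - μ) / (L + μ)))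
    (hconv : ∀ i : ℕ, ‖xt i - xstar‖ ≤ r ^ i * ‖x0 - xstar‖) :
    ∀ k : ℕ, ∑ i ∈ Finset.range (k + 1), ‖x i - xt i‖ ≤
      (1 + L / μ) ^ 2 * (M / (2 * L)) *
        (1 / 2 - (1 - μ / L) ^ k + (1 / 2) * ((1 - μ / L) / (1 + μ / L)) ^ k) *
        ‖x0 - xstar‖ ^ 2 := by
  intro K
  have hL : 0 < L := hμ.trans_le hμL
  have hsymm := isSymmetric_fderiv_gradient (x := xstar) hf.contDiffAt
  rw [← hhess] at hsymm
  have hcontr :=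
    norm_sub_one_div_smul_apply_le_of_inner_bounds hsymm hL hμL (hlow xstar) (hup xstar)
  have htaylor (y) : ‖gradient f y - hess xstar (y - xstar)‖ ≤ M / 2 * ‖y - xstar‖ ^ 2 := by
    have hgrad (z) : HasFDerivAt (gradient f) (hess z) z :=
      hhess z ▸ (hf.differentiable_gradient z).hasFDerivAt
    simpa [IsLocalMin.gradient_eq_zero (Filter.Eventually.of_forall hmin)] using
      norm_sub_sub_fderiv_apply_le_of_lipschitz hgrad (hlip xstar) y
  -- `hlip` forces `0 ≤ M` only in positive dimension
  have hM : 0 ≤ M ∨ x0 = xstar := by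
    refine or_iff_not_imp_right.2 fun hne ↦ le_of_mul_le_mul_right ?_ (norm_sub_pos_iff.2 hne)
    simpa using (norm_nonneg _).trans (hlip xstar x0)
  have hr2 : r ^ 2 = (1 - μ / L) / (1 + μ / L) := by
    rw [hr, Real.sq_sqrt (div_nonneg (by linarith) (by linarith))]
    field_simp
  have hstep (i : ℕ) : ‖x (i + 1) - xt (i + 1)‖ ≤ (1 - μ / L) * ‖x i - xt i‖ +
      M / (2 * L) * ‖x0 - xstar‖ ^ 2 * ((1 - μ / L) / (1 + μ / L)) ^ i := by
    rw [hx i, hxt i]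
    have hforcing : M / 2 * ‖xt i - xstar‖ ^ 2 ≤ M / 2 * ((r ^ 2) ^ i * ‖x0 - xstar‖ ^ 2) := by
      rcases hM with hM | rfl
      · rw [← pow_mul, mul_comm 2 i, pow_mul, ← mul_pow]
        gcongr
        exact hconv i
      · have : ‖xt i - x0‖ = 0 := by simpa using hconv i
        simp [this]
    calc _ ≤ (1 - μ / L) * ‖x i - xt i‖ + 1 / L * (M / 2 * ‖xt i - xstar‖ ^ 2) :=
          norm_linearized_step_sub_step_le (by positivity) hcontr (htaylor (xt i)) (x i)
      _ ≤ (1 - μ / L) * ‖x i - xt i‖ + 1 / L * (M / 2 * ((r ^ 2) ^ i * ‖x0 - xstar‖ ^ 2)) := by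
          gcongr
      _ = _ := by rw [hr2]; ring
  have hC : 0 ≤ M / (2 * L) * ‖x0 - xstar‖ ^ 2 := by
    simpa [hx0, hxt0] using (norm_nonneg _).trans (hstep 0)
  calc _ ≤ _ := sum_range_succ_le_of_recurrence (div_pos hμ hL) ((div_le_one hL).2 hμL) hC
        (by simp [hx0, hxt0]) hstep K
    _ = _ := by
      field_simp
      ring
end
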